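/- On the two-dimensional torus 𝕋²=ℝ²/ℤ² with Lebesgue measure, let T_{0,1}(x,y)=(3x+y, 2x+y) mod 1 be the automorphism given by the matrix [[3,1],[2,1]], let T_{1,0}(x,y)=(x+1/2, y), let P be the two-set partition {[0,1/2)×[0,1), [1/2,1)×[0,1)}, and let I₁ be the σ-algebra of Borel sets invariant under T_{1,0}. Then for every ℓ ∈ ℤ, the σ-algebra generated by I₁ together with the partition T_{0,-ℓ}(P) is the whole Borel σ-algebra of 𝕋², modulo Lebesgue-null sets. -/

import Mathlib

open MeasureTheory
open scoped symmDiff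

/-- The σ-algebra of subsets of `X` that are `m`-measurable and invariant under every map
of the family `U : ι → X → X`. -/
def invariantSets {X ι : Type*} (m : MeasurableSpace X) (U : ι → X → X) :
    MeasurableSpace X where
  MeasurableSet' s := MeasurableSet[m] s ∧ ∀ i, U i ⁻¹' s = s
  measurableSet_empty := ⟨m.measurableSet_empty, fun _ => by simp⟩
  measurableSet_compl := fun s hs =>
    ⟨m.measurableSet_compl s hs.1, fun i => by rw [Set.preimage_compl, hs.2 i]⟩
  measurableSet_iUnion := fun f hf =>
    ⟨m.measurableSet_iUnion f (fun n => (hf n).1), fun i => by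
      rw [Set.preimage_iUnion]
      exact Set.iUnion_congr fun n => (hf n).2 i⟩

/-- The automorphism of the two-dimensional torus given by the matrix `[[3,1],[2,1]]`,
i.e. `T_{0,1}(x,y) = (3x + y, 2x + y)`, as an invertible map. -/
noncomputable def torusAut : Equiv.Perm (UnitAddCircle × UnitAddCircle) where
  toFun p := ((3 : ℤ) • p.1 + p.2, (2 : ℤ) • p.1 + p.2)
  invFun p := (p.1 - p.2, (-2 : ℤ) • p.1 + (3 : ℤ) • p.2)
  left_inv p := by
    refine Prod.ext ?_ ?_
    · show ((3 : ℤ) • p.1 + p.2) - ((2 : ℤ) • p.1 + p.2) = p.1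
      abel
    · show (-2 : ℤ) • ((3 : ℤ) • p.1 + p.2) + (3 : ℤ) • ((2 : ℤ) • p.1 + p.2) = p.2
      simp only [smul_add, smul_smul]
      abel
  right_inv p := by
    refine Prod.ext ?_ ?_
    · show (3 : ℤ) • (p.1 - p.2) + ((-2 : ℤ) • p.1 + (3 : ℤ) • p.2) = p.1
      simp only [smul_sub]
      abel
    · show (2 : ℤ) • (p.1 - p.2) + ((-2 : ℤ) • p.1 + (3 : ℤ) • p.2) = p.2
      simp only [smul_sub]
      abel

/-- The translation `T_{1,0}(x,y) = (x + 1/2, y)` of the two-dimensional torus. -/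
noncomputable def torusTranslation : UnitAddCircle × UnitAddCircle →
    UnitAddCircle × UnitAddCircle :=
  fun p => (p.1 + ((1 / 2 : ℝ) : UnitAddCircle), p.2)

/-- The first piece `[0, 1/2) × [0, 1)` of the partition `P` of the torus. -/
def torusHalf₁ : Set (UnitAddCircle × UnitAddCircle) :=
  ((fun r : ℝ => (r : UnitAddCircle)) '' Set.Ico (0 : ℝ) (1 / 2)) ×ˢ Set.univ

/-- The second piece `[1/2, 1) × [0, 1)` of the partition `P` of the torus. -/
def torusHalf₂ : Set (UnitAddCircle × UnitAddCircle) :=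
  ((fun r : ℝ => (r : UnitAddCircle)) '' Set.Ico (1 / 2 : ℝ) 1) ×ˢ Set.univ

/-!
Let `A = T_{0,1}^{-ℓ} ([0,1/2) × 𝕋)`. Since `T_{1,0}` commutes with `T_{0,1}` and swaps the two
halves of `P`, it is an involution with `T_{1,0}⁻¹ A = Aᶜ`. For a Borel set `s`, the set
`(s ∩ A) ∪ T_{1,0}⁻¹ (s ∩ A)` is `T_{1,0}`-invariant and meets `A` exactly in `s ∩ A`; likewise
for `Aᶜ`. So `s` itself lies in `I₁ ∨ σ(A)`, with no null sets to discard.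
-/

open Set Function MeasurableSpace

section Involution

variable {X ι : Type*} {m : MeasurableSpace X} {τ : X → X}

lemma measurableSet_invariantSets_union_preimage (hτ : Measurable τ) (hinv : Involutive τ)
    {s : Set X} (hs : MeasurableSet[m] s) :
    MeasurableSet[invariantSets m (fun _ : ι => τ)] (s ∪ τ ⁻¹' s) := by
  refine ⟨hs.union (hτ hs), fun _ => ?_⟩
  rw [preimage_union, ← preimage_comp, hinv.comp_self, preimage_id, union_comm]

lemma union_preimage_inter_inter_eq {B : Set X} (hB : Disjoint (τ ⁻¹' B) B) (s : Set X) :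
    (s ∩ B ∪ τ ⁻¹' (s ∩ B)) ∩ B = s ∩ B := by
  rw [union_inter_distrib_right, inter_assoc, inter_self,
    (hB.mono_left (preimage_mono inter_subset_right)).inter_eq, union_empty]

theorem le_invariantSets_sup_generateFrom_of_preimage_eq_compl (hτ : Measurable τ)
    (hinv : Involutive τ) {A : Set X} (hA : MeasurableSet[m] A) (hAτ : τ ⁻¹' A = Aᶜ) :
    m ≤ invariantSets m (fun _ : ι => τ) ⊔ generateFrom {A} := by
  intro s hs
  have hA' : MeasurableSet[invariantSets m (fun _ : ι => τ) ⊔ generateFrom {A}] A :=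
    le_sup_right (α := MeasurableSpace X) A (measurableSet_generateFrom rfl)
  have inter_mem : ∀ B, MeasurableSet[m] B → Disjoint (τ ⁻¹' B) B →
      MeasurableSet[invariantSets m (fun _ : ι => τ) ⊔ generateFrom {A}] B →
      MeasurableSet[invariantSets m (fun _ : ι => τ) ⊔ generateFrom {A}] (s ∩ B) := by
    intro B hBm hBτ hB
    rw [← union_preimage_inter_inter_eq hBτ s]
    exact (le_sup_left (α := MeasurableSpace X) _
      (measurableSet_invariantSets_union_preimage hτ hinv (hs.inter hBm))).inter hB
  rw [← inter_union_compl s A]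
  refine (inter_mem A hA ?_ hA').union (inter_mem Aᶜ hA.compl ?_ hA'.compl)
  · rw [hAτ]; exact disjoint_compl_left
  · rw [preimage_compl, hAτ]; exact disjoint_compl_left

end Involution

lemma AddCircle.coe_mem_image_coe_iff {𝕜 : Type*} [AddCommGroup 𝕜] [LinearOrder 𝕜]
    [IsOrderedAddMonoid 𝕜] [Archimedean 𝕜] {p a : 𝕜} [Fact (0 < p)] {s : Set 𝕜}
    (hs : s ⊆ Ico a (a + p)) {y : 𝕜} (hy : y ∈ Ico a (a + p)) :
    (y : AddCircle p) ∈ ((↑) : 𝕜 → AddCircle p) '' s ↔ y ∈ s := by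
  refine ⟨?_, mem_image_of_mem _⟩
  rintro ⟨z, hz, hzy⟩
  rwa [← (AddCircle.coe_eq_coe_iff_of_mem_Ico (hs hz) hy).mp hzy]

def halfCircle : Set UnitAddCircle := (fun r : ℝ => (r : UnitAddCircle)) '' Ico 0 (1 / 2)

lemma coe_mem_halfCircle_iff {y : ℝ} (hy : y ∈ Ico (0 : ℝ) 1) :
    (y : UnitAddCircle) ∈ halfCircle ↔ y < 1 / 2 := by
  have hsub : Ico (0 : ℝ) (1 / 2) ⊆ Ico 0 (0 + 1) := Ico_subset_Ico le_rfl (by norm_num)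
  rw [halfCircle, AddCircle.coe_mem_image_coe_iff hsub (by rwa [zero_add]), mem_Ico,
    and_iff_right hy.1]

lemma measurableSet_halfCircle : MeasurableSet halfCircle := by
  have hrep : halfCircle = (fun x => (AddCircle.equivIco 1 0 x : ℝ)) ⁻¹' Iio (1 / 2) := by
    ext x
    conv_lhs => rw [← AddCircle.coe_equivIco (a := 0) (y := x)]
    exact coe_mem_halfCircle_iff (by simpa using (AddCircle.equivIco 1 0 x).2)
  rw [hrep]
  exact (measurable_subtype_coe.comp (AddCircle.measurableEquivIco 1 0).measurable)
    measurableSet_Iio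

lemma add_half_mem_halfCircle_iff (x : UnitAddCircle) :
    x + ((1 / 2 : ℝ) : UnitAddCircle) ∈ halfCircle ↔ x ∉ halfCircle := by
  obtain ⟨b, hb, rfl⟩ := AddCircle.eq_coe_Ico x
  rw [coe_mem_halfCircle_iff hb]
  rcases lt_or_ge b (1 / 2) with h | h
  · rw [← AddCircle.coe_add, coe_mem_halfCircle_iff ⟨by linarith [hb.1], by linarith⟩]
    exact iff_of_false (by linarith [hb.1]) (not_not_intro h)
  · have hshift :
        (b : UnitAddCircle) + ((1 / 2 : ℝ) : UnitAddCircle) = ((b - 1 / 2 : ℝ) : _) := by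
      rw [← AddCircle.coe_add, show b + 1 / 2 = b - 1 / 2 + 1 by ring, AddCircle.coe_add,
        AddCircle.coe_period, add_zero]
    rw [hshift, coe_mem_halfCircle_iff ⟨by linarith, by linarith [hb.2]⟩]
    exact iff_of_true (by linarith [hb.2]) (not_lt.mpr h)

lemma torusTranslation_involutive : Involutive torusTranslation := by
  have half_add_half : ((1 / 2 : ℝ) : UnitAddCircle) + ((1 / 2 : ℝ) : UnitAddCircle) = 0 := by
    rw [← AddCircle.coe_add]; norm_num
  intro p
  exact Prod.ext (by simp only [torusTranslation, add_assoc, half_add_half, add_zero]) rfl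

lemma measurable_torusTranslation : Measurable torusTranslation :=
  ((continuous_fst.add continuous_const).prodMk continuous_snd).measurable

lemma commute_torusTranslation_torusAut :
    Commute (torusTranslation_involutive.toPerm _) torusAut := by
  have two_half : (2 : ℤ) • ((1 / 2 : ℝ) : UnitAddCircle) = 0 := by
    rw [← AddCircle.coe_zsmul]; norm_num
  have three_half : (3 : ℤ) • ((1 / 2 : ℝ) : UnitAddCircle) = ((1 / 2 : ℝ) : UnitAddCircle) := by
    rw [show (3 : ℤ) = 2 + 1 by norm_num, add_zsmul, two_half, one_zsmul, zero_add]
  refine Equiv.ext fun p => Prod.ext ?_ ?_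
  · show (3 : ℤ) • p.1 + p.2 + _ = (3 : ℤ) • (p.1 + _) + p.2
    rw [smul_add, three_half]; abel
  · show (2 : ℤ) • p.1 + p.2 = (2 : ℤ) • (p.1 + _) + p.2
    rw [smul_add, two_half, add_zero]

lemma measurable_torusAut_zpow (ℓ : ℤ) : Measurable ⇑(torusAut ^ ℓ) := by
  have measurable_torusAut : Measurable ⇑torusAut :=
    ((((continuous_zsmul 3).comp continuous_fst).add continuous_snd).prodMk
      (((continuous_zsmul 2).comp continuous_fst).add continuous_snd)).measurable
  have measurable_torusAut_inv : Measurable ⇑torusAut⁻¹ :=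
    ((continuous_fst.sub continuous_snd).prodMk (((continuous_zsmul (-2)).comp
      continuous_fst).add ((continuous_zsmul 3).comp continuous_snd))).measurable
  induction ℓ using Int.induction_on with
  | zero => exact measurable_id
  | succ n ih => rw [zpow_add_one]; exact ih.comp measurable_torusAut
  | pred n ih => rw [zpow_sub_one]; exact ih.comp measurable_torusAut_inv

lemma torusTranslation_preimage_torusHalf₁ : torusTranslation ⁻¹' torusHalf₁ = torusHalf₁ᶜ := by
  ext p
  simp only [torusHalf₁, mem_preimage, mem_prod, mem_univ, and_true, mem_compl_iff]
  exact add_half_mem_halfCircle_iff p.1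

lemma torusTranslation_preimage_torusAut_zpow_preimage_torusHalf₁ (ℓ : ℤ) :
    torusTranslation ⁻¹' (⇑(torusAut ^ ℓ) ⁻¹' torusHalf₁) =
      (⇑(torusAut ^ ℓ) ⁻¹' torusHalf₁)ᶜ := by
  have hcomm : ⇑(torusAut ^ ℓ) ∘ torusTranslation = torusTranslation ∘ ⇑(torusAut ^ ℓ) :=
    congrArg DFunLike.coe (commute_torusTranslation_torusAut.zpow_right ℓ).eq.symm
  rw [← preimage_comp, hcomm, preimage_comp, torusTranslation_preimage_torusHalf₁,
    preimage_compl]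

/-- **The σ-algebra generated by `I₁` and `T_{0,-ℓ}(P)` is everything.**
On the torus `𝕋²` with the automorphism `T_{0,1}(x,y) = (3x+y, 2x+y)`, the translation
`T_{1,0}(x,y) = (x + 1/2, y)`, the partition `P = {[0,1/2)×[0,1), [1/2,1)×[0,1)}` and the
σ-algebra `I₁` of Borel sets invariant under `T_{1,0}`, for every `ℓ ∈ ℤ` the σ-algebra
generated by `I₁` and the partition `T_{0,-ℓ}(P)` (whose pieces are the preimages of the
pieces of `P` under `T_{0,1}^ℓ`) is the whole Borel σ-algebra, modulo Lebesgue-null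
sets. -/
theorem torus_invariants_join_partition_generates_borel (ℓ : ℤ) :
    ∀ s : Set (UnitAddCircle × UnitAddCircle), MeasurableSet s →
      ∃ t : Set (UnitAddCircle × UnitAddCircle),
        MeasurableSet[invariantSets inferInstance (fun _ : Unit => torusTranslation) ⊔
          MeasurableSpace.generateFrom
            {⇑(torusAut ^ ℓ) ⁻¹' torusHalf₁, ⇑(torusAut ^ ℓ) ⁻¹' torusHalf₂}] t ∧
        ((volume : Measure UnitAddCircle).prod (volume : Measure UnitAddCircle))
          (s ∆ t) = 0 := by
  intro s hs
  refine ⟨s, ?_, by simp⟩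
  have hA : MeasurableSet (⇑(torusAut ^ ℓ) ⁻¹' torusHalf₁) :=
    measurable_torusAut_zpow ℓ (measurableSet_halfCircle.prod MeasurableSet.univ)
  have generates := le_invariantSets_sup_generateFrom_of_preimage_eq_compl (ι := Unit)
    measurable_torusTranslation torusTranslation_involutive hA
    (torusTranslation_preimage_torusAut_zpow_preimage_torusHalf₁ ℓ)
  exact sup_le_sup_left (generateFrom_mono (singleton_subset_iff.mpr (mem_insert _ _))) _ s
    (generates s hs)
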